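/- The number of S-Motzkin paths of length 3n that contain no two horizontal steps at the same height with all intermediate steps at or above that height (i.e., 'atomic' S-Motzkin paths, which arise as greedy h-insertions into Dyck paths) equals the Catalan number C_n = (1/(n+1)) * C(2n, n). -/

import Mathlib

inductive Step : Type
  | u : Step
  | d : Step
  | h : Step
deriving DecidableEq, Repr

def stepVal : Step → ℤ
  | Step.u => 1
  | Step.d => -1
  | Step.h => 0

/-- Sum of step values (final height) of a word. -/
def hsum (w : List Step) : ℤ := (w.map stepVal).sum

/-- All prefixes have nonnegative height. -/
def NonnegPrefixes (w : List Step) : Prop := ∀ p : List Step, p <+: w → 0 ≤ hsum p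

/-- A Motzkin path: nonnegative prefix heights and total height 0. -/
def IsMotzkin (w : List Step) : Prop := NonnegPrefixes w ∧ hsum w = 0

/-- The word (hu)^n. -/
def huWord (n : ℕ) : List Step := (List.replicate n [Step.h, Step.u]).flatten

/-- An S-Motzkin path with n up, n down, n horizontal steps:
a Motzkin path whose subword of non-down steps is (hu)^n. -/
def IsSMotzkin (n : ℕ) (w : List Step) : Prop :=
  IsMotzkin w ∧ w.count Step.u = n ∧ w.count Step.d = n ∧ w.count Step.h = n ∧
    w.filter (fun s => s ≠ Step.d) = huWord n

/-- A nonempty word over {h, u}. -/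
def HUBlock (A : List Step) : Prop := A ≠ [] ∧ ∀ s ∈ A, s = Step.h ∨ s = Step.u

/-- Glue blocks A_i with runs of d_i down steps: A_0 d^{d_1} A_1 d^{d_2} ... -/
def joinAM (As : List (List Step)) (ds : List ℕ) : List Step :=
  (List.zipWith (fun A k => A ++ List.replicate k Step.d) As ds).flatten

/-- w decomposes as A_0 D_1 A_1 D_2 ... A_{t-1} D_t with A_i nonempty over {h,u}
and D_i nonempty runs of down steps. -/
def AMDecomp (w : List Step) (As : List (List Step)) (ds : List ℕ) : Prop :=
  As.length = ds.length ∧ (∀ A ∈ As, HUBlock A) ∧ (∀ k ∈ ds, 0 < k) ∧ w = joinAM As ds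

/-- An Asinowski–Mansour path with n up, n down, n horizontal steps. -/
def IsAM (n : ℕ) (w : List Step) : Prop :=
  IsMotzkin w ∧ w.count Step.u = n ∧ w.count Step.d = n ∧ w.count Step.h = n ∧
    ∃ As ds, AMDecomp w As ds

/-- A Dyck path with n up and n down steps, encoded over the alphabet Step. -/
def IsDyck (n : ℕ) (w : List Step) : Prop :=
  (∀ s ∈ w, s = Step.u ∨ s = Step.d) ∧ w.count Step.u = n ∧ w.count Step.d = n ∧
    NonnegPrefixes w

/-- Height of the path at the start of step i. -/
def heightAt (w : List Step) (i : ℕ) : ℤ := hsum (w.take i)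

/-- Two horizontal steps at positions i < j, at the same height, with all steps
strictly between them at or above that height. -/
def Matched (w : List Step) (i j : ℕ) : Prop :=
  i < j ∧ w[i]? = some Step.h ∧ w[j]? = some Step.h ∧
    heightAt w i = heightAt w j ∧ ∀ k, i < k → k < j → heightAt w i ≤ heightAt w k

/-- Positions of the horizontal steps of w, from left to right. -/
def hPositions (w : List Step) : List ℕ := List.findIdxs (fun s => s = Step.h) w

/-- Lexicographic (weak) order on lists of naturals. -/
def LexLe (l l' : List ℕ) : Prop := l = l' ∨ List.Lex (· < ·) l l'

/-- w is an S-Motzkin word obtained by inserting horizontal steps into D. -/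
def ValidIns (D w : List Step) : Prop :=
  (∃ m, IsSMotzkin m w) ∧ w.filter (fun s => s ≠ Step.h) = D

/-- w is the greedy h-insertion into D: each h leftmost, i.e. the list of positions
of the h's is lexicographically minimal among all valid insertions. -/
def GreedyFor (D w : List Step) : Prop :=
  ValidIns D w ∧ ∀ w', ValidIns D w' → LexLe (hPositions w) (hPositions w')

/-- An S-Motzkin path is atomic if it has no matched pair of horizontal steps. -/
def Atomic (w : List Step) : Prop := ¬ ∃ i j, Matched w i j

/-!
Erasing the h steps of an S-Motzkin path leaves a Dyck path, and in an atomic path the h steps are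
forced: one at the start and one directly after every u but the last. Indeed, take an h at height
`H` not directly preceded by a u, and let `q` be the point where the path last climbed to height `H`
before it (or the start). The step at `q` cannot be a d, since the path stays at height `≥ H` until
the h, nor a u, since it follows a u and the subword `(hu)^n` has no `uu`; so it is an h matched
with the first. Conversely, if every h follows a u, the u before the right member of a matched pair
lies strictly between the two and below them. Hence erasing the h's is a bijection onto the Dyck
paths of semilength `n`, which are counted by the Catalan numbers.
-/

@[simp] lemma hsum_nil : hsum [] = 0 := rfl

@[simp] lemma hsum_cons (s : Step) (w : List Step) : hsum (s :: w) = stepVal s + hsum w := by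
  simp [hsum]

@[simp] lemma hsum_append (v w : List Step) : hsum (v ++ w) = hsum v + hsum w := by
  simp [hsum]

lemma hsum_eq_count_sub_count (w : List Step) :
    hsum w = (w.count Step.u : ℤ) - w.count Step.d := by
  induction w with
  | nil => rfl
  | cons s w ih => cases s <;> simp [ih, stepVal] <;> ring

lemma count_filter_ne {s t : Step} (hst : s ≠ t) (w : List Step) :
    (w.filter (fun x => x ≠ t)).count s = w.count s :=
  List.count_filter (by simpa using hst)

lemma hsum_filter_ne_h (w : List Step) : hsum (w.filter (fun s => s ≠ Step.h)) = hsum w := by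
  simp only [hsum_eq_count_sub_count, count_filter_ne (by decide : Step.u ≠ Step.h),
    count_filter_ne (by decide : Step.d ≠ Step.h)]

lemma nonnegPrefixes_iff {w : List Step} : NonnegPrefixes w ↔ ∀ i, 0 ≤ heightAt w i :=
  ⟨fun hw i => hw _ (List.take_prefix i w), fun hw _ hp => List.prefix_iff_eq_take.mp hp ▸ hw _⟩

lemma nonnegPrefixes_filter_ne_h_iff {w : List Step} :
    NonnegPrefixes (w.filter (fun s => s ≠ Step.h)) ↔ NonnegPrefixes w := by
  refine ⟨fun hw p hp => ?_, fun hw _ hp => ?_⟩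
  · exact hsum_filter_ne_h p ▸ hw _ (hp.filter _)
  · obtain ⟨q, hq, rfl⟩ := List.prefix_filter_iff.mp hp
    exact (hsum_filter_ne_h q).symm ▸ hw q hq

lemma heightAt_succ {w : List Step} {i : ℕ} (hi : i < w.length) :
    heightAt w (i + 1) = heightAt w i + stepVal w[i] := by
  unfold heightAt
  rw [List.take_add_one, List.getElem?_eq_getElem hi, Option.toList_some, hsum_append]
  simp

lemma huWord_succ (n : ℕ) : huWord (n + 1) = Step.h :: Step.u :: huWord n := by
  simp [huWord, List.replicate_succ]

lemma count_h_huWord (n : ℕ) : (huWord n).count Step.h = n := by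
  induction n with
  | zero => rfl
  | succ n ih => simp [huWord_succ, ih]

theorem isSMotzkin_iff {n : ℕ} {w : List Step} :
    IsSMotzkin n w ↔ IsDyck n (w.filter (fun s => s ≠ Step.h)) ∧
      w.filter (fun s => s ≠ Step.d) = huWord n := by
  have hu := count_filter_ne (by decide : Step.u ≠ Step.h) w
  have hd := count_filter_ne (by decide : Step.d ≠ Step.h) w
  have hud : ∀ s ∈ w.filter (fun s => s ≠ Step.h), s = Step.u ∨ s = Step.d := by
    intro s hs
    cases s <;> simp_all
  simp only [IsSMotzkin, IsMotzkin, IsDyck, nonnegPrefixes_filter_ne_h_iff, hu, hd]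
  constructor
  · rintro ⟨⟨hN, -⟩, hcu, hcd, -, hfd⟩
    exact ⟨⟨hud, hcu, hcd, hN⟩, hfd⟩
  · rintro ⟨⟨-, hcu, hcd, hN⟩, hfd⟩
    refine ⟨⟨hN, by rw [hsum_eq_count_sub_count, hcu, hcd, sub_self]⟩, hcu, hcd, ?_, hfd⟩
    rw [← count_filter_ne (by decide : Step.h ≠ Step.d), hfd, count_h_huWord]

lemma IsDyck.h_not_mem {n : ℕ} {D : List Step} (hD : IsDyck n D) : Step.h ∉ D :=
  fun h => by simpa using hD.1 _ h

lemma not_infix_u_cons_huWord (n : ℕ) : ¬ [Step.u, Step.u] <:+: Step.u :: huWord n := by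
  induction n with
  | zero => exact fun h => by simpa [huWord] using h.length_le
  | succ n ih => simpa [huWord_succ, List.infix_cons_iff] using ih

/-- `(Step.u :: w)[q]` is the step before position `q` of `w`, with a virtual up step in front. -/
lemma IsSMotzkin.not_u_u {n : ℕ} {w : List Step} (hw : IsSMotzkin n w) {q : ℕ}
    (hprev : (Step.u :: w)[q]? = some Step.u) (hq : w[q]? = some Step.u) : False := by
  have hinfix : [Step.u, Step.u] <:+: Step.u :: w := by
    refine List.infix_iff_getElem?.mpr ⟨q, ?_, fun i hi => ?_⟩
    · have := (List.getElem?_eq_some_iff.mp hq).1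
      simp only [List.length_cons, List.length_nil]
      omega
    · match i, hi with
      | 0, _ => simpa using hprev
      | 1, _ => simpa [Nat.add_comm] using hq
  have hfilter := hinfix.filter (fun s => s ≠ Step.d)
  rw [List.filter_cons_of_pos (l := w) (by decide), hw.2.2.2.2] at hfilter
  exact not_infix_u_cons_huWord n hfilter

def HFollowsU (w : List Step) : Prop := w.IsChain (fun a b => b = Step.h → a = Step.u)

theorem HFollowsU.atomic {w : List Step} (hw : HFollowsU w) : Atomic w := by
  rintro ⟨i, j, hij, hi, hj, hlevel, habove⟩
  obtain ⟨k, rfl⟩ : ∃ k, j = k + 1 := ⟨j - 1, by omega⟩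
  obtain ⟨hlen, hjh⟩ := List.getElem?_eq_some_iff.mp hj
  have hku : w[k] = Step.u := List.IsChain.getElem hw k hlen hjh
  have hik : i ≠ k := by
    rintro rfl
    simp [List.getElem?_eq_getElem (by omega : i < w.length), hku] at hi
  have hup := heightAt_succ (by omega : k < w.length)
  have := habove k (by omega) (by omega)
  simp only [hku, stepVal] at hup
  omega

lemma exists_level_entry {w : List Step} (hN : NonnegPrefixes w) {j : ℕ} (hj : j < w.length) :
    ∃ q ≤ j, heightAt w q = heightAt w j ∧ (∀ k, q ≤ k → k ≤ j → heightAt w j ≤ heightAt w k) ∧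
      (Step.u :: w)[q]? = some Step.u := by
  classical
  have hex : ∃ q, ∀ k, q ≤ k → k ≤ j → heightAt w j ≤ heightAt w k :=
    ⟨j, fun k h1 h2 => by rw [show k = j by omega]⟩
  obtain ⟨q, habove, hmin⟩ : ∃ q, (∀ k, q ≤ k → k ≤ j → heightAt w j ≤ heightAt w k) ∧
      ∀ p < q, ∃ k, p ≤ k ∧ k ≤ j ∧ heightAt w k < heightAt w j := by
    refine ⟨Nat.find hex, Nat.find_spec hex, fun p hp => ?_⟩
    simpa using Nat.find_min hex hp
  have hqj : q ≤ j := by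
    by_contra! hjq
    obtain ⟨k, h1, h2, hlt⟩ := hmin j hjq
    rw [show k = j by omega] at hlt
    exact hlt.false
  cases q with
  | zero => exact ⟨0, hqj, le_antisymm (nonnegPrefixes_iff.mp hN j) (habove 0 le_rfl hqj), habove, rfl⟩
  | succ p =>
    obtain ⟨k, hpk, hkj, hlt⟩ := hmin p (by omega)
    obtain rfl : k = p := by
      by_contra hkp
      exact (habove k (by omega) hkj).not_gt hlt
    have hup := heightAt_succ (by omega : k < w.length)
    have hge := habove (k + 1) le_rfl hqj
    have hwk : w[k] = Step.u := by
      cases hwk : w[k] <;> simp only [hwk, stepVal] at hup <;> first | rfl | omega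
    refine ⟨k + 1, hqj, ?_, habove, by simpa using List.getElem?_eq_some_iff.mpr ⟨_, hwk⟩⟩
    simp only [hwk, stepVal] at hup
    omega

theorem IsSMotzkin.hFollowsU {n : ℕ} {w : List Step} (hw : IsSMotzkin n w) (ha : Atomic w) :
    HFollowsU w := by
  refine List.isChain_iff_getElem.mpr fun i hi hh => ?_
  obtain ⟨q, hqi, hlevel, habove, hentry⟩ := exists_level_entry hw.1.1 hi
  obtain hq | rfl := hqi.lt_or_eq
  · exfalso
    have hstep := heightAt_succ (hq.trans hi)
    have := habove (q + 1) (by omega) (by omega)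
    cases hwq : w[q] with
    | u => exact hw.not_u_u hentry (List.getElem?_eq_some_iff.mpr ⟨_, hwq⟩)
    | d => simp only [hwq, stepVal] at hstep; omega
    | h =>
      exact ha ⟨q, i + 1, hq, List.getElem?_eq_some_iff.mpr ⟨_, hwq⟩,
        List.getElem?_eq_some_iff.mpr ⟨hi, hh⟩, hlevel, fun k h1 h2 => hlevel ▸ habove k h1.le h2.le⟩
  · simpa [List.getElem?_eq_getElem (Nat.lt_of_succ_lt hi)] using hentry

lemma HFollowsU.filter_ne_d_ne_h_cons {t l : List Step} (ht : HFollowsU (Step.d :: t)) :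
    t.filter (fun s => s ≠ Step.d) ≠ Step.h :: l := by
  induction t with
  | nil => simp
  | cons s t ih =>
    cases s with
    | u => simp
    | d => simpa using ih ht.tail
    | h => simp [HFollowsU] at ht

theorem HFollowsU.eq_of_filter_eq {a : Step} {w w' : List Step}
    (hw : HFollowsU (a :: w)) (hw' : HFollowsU (a :: w'))
    (hd : w.filter (fun s => s ≠ Step.d) = w'.filter (fun s => s ≠ Step.d))
    (hh : w.filter (fun s => s ≠ Step.h) = w'.filter (fun s => s ≠ Step.h)) : w = w' := by
  induction w generalizing a w' with
  | nil => cases w' with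
    | nil => rfl
    | cons y t' => cases y <;> simp at hd hh
  | cons x t ih => cases w' with
    | nil => cases x <;> simp at hd hh
    | cons y t' =>
      -- Distinct heads differ in one of the two projections, except `d` against `h`, where the
      -- `h` would have to follow a run of `d`s.
      cases x <;> cases y
      all_goals first
        | exact congrArg _ (ih hw.tail hw'.tail (by simpa using hd) (by simpa using hh))
        | exact (HFollowsU.filter_ne_d_ne_h_cons hw.tail (by simpa using hd)).elim
        | exact (HFollowsU.filter_ne_d_ne_h_cons hw'.tail (by simpa using hd.symm)).elim
        | simp at hd hh

def insertH : List Step → List Step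
  | [] => []
  | Step.u :: t => if Step.u ∈ t then Step.u :: Step.h :: insertH t else Step.u :: insertH t
  | Step.d :: t => Step.d :: insertH t
  | Step.h :: t => Step.h :: insertH t

def greedyInsertH (D : List Step) : List Step := Step.h :: insertH D

lemma insertH_of_u_not_mem {l : List Step} (hl : Step.u ∉ l) : insertH l = l := by
  induction l with
  | nil => rfl
  | cons s t ih =>
    cases s
    · simp at hl
    all_goals simp_all [insertH]

lemma filter_ne_h_insertH (l : List Step) :
    (insertH l).filter (fun s => s ≠ Step.h) = l.filter (fun s => s ≠ Step.h) := by
  induction l with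
  | nil => rfl
  | cons s t ih =>
    cases s
    · by_cases hu : Step.u ∈ t <;> simpa [insertH, hu] using ih
    all_goals simpa [insertH] using ih

lemma filter_ne_h_greedyInsertH {D : List Step} (hD : Step.h ∉ D) :
    (greedyInsertH D).filter (fun s => s ≠ Step.h) = D := by
  rw [greedyInsertH, List.filter_cons_of_neg (by simp), filter_ne_h_insertH, List.filter_eq_self]
  exact fun s hs => by simpa using ne_of_mem_of_not_mem hs hD

lemma filter_ne_d_greedyInsertH {D : List Step} (hD : Step.h ∉ D) (hu : Step.u ∈ D) :
    (greedyInsertH D).filter (fun s => s ≠ Step.d) = huWord (D.count Step.u) := by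
  induction D with
  | nil => simp at hu
  | cons s t ih =>
    cases s with
    | u =>
      by_cases hut : Step.u ∈ t
      · simpa [greedyInsertH, insertH, hut, huWord_succ] using ih (by simpa using hD) hut
      · have htd : ∀ s ∈ t, s = Step.d := fun s hs => by cases s <;> simp_all
        simpa [greedyInsertH, insertH, hut, insertH_of_u_not_mem hut, List.count_eq_zero.mpr hut, huWord]
          using htd
    | d => simpa [greedyInsertH, insertH] using ih (by simpa using hD) (by simpa using hu)
    | h => simp at hD

lemma hFollowsU_cons_insertH {D : List Step} (hD : Step.h ∉ D) (a : Step) :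
    HFollowsU (a :: insertH D) := by
  induction D generalizing a with
  | nil => simp [HFollowsU, insertH]
  | cons s t ih =>
    cases s with
    | u =>
      by_cases hut : Step.u ∈ t
      · simpa [HFollowsU, insertH, hut] using ih (by simpa using hD) Step.h
      · simpa [HFollowsU, insertH, hut] using ih (by simpa using hD) Step.u
    | d => simpa [HFollowsU, insertH] using ih (by simpa using hD) Step.d
    | h => simp at hD

lemma hFollowsU_u_cons {w : List Step} : HFollowsU (Step.u :: w) ↔ HFollowsU w := by
  cases w <;> simp [HFollowsU]

lemma IsDyck.isSMotzkin_greedyInsertH {n : ℕ} {D : List Step} (hD : IsDyck n D) (hn : 0 < n) :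
    IsSMotzkin n (greedyInsertH D) := by
  have hu : Step.u ∈ D := List.count_pos_iff.mp (hD.2.1 ▸ hn)
  rw [isSMotzkin_iff, filter_ne_h_greedyInsertH hD.h_not_mem, filter_ne_d_greedyInsertH hD.h_not_mem hu,
    hD.2.1]
  exact ⟨hD, rfl⟩

theorem IsSMotzkin.greedyInsertH_filter_ne_h {n : ℕ} {w : List Step} (hw : IsSMotzkin n w)
    (ha : Atomic w) (hn : 0 < n) : greedyInsertH (w.filter (fun s => s ≠ Step.h)) = w := by
  have hD := (isSMotzkin_iff.mp hw).1
  exact HFollowsU.eq_of_filter_eq (a := Step.u)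
    (hFollowsU_u_cons.mpr (hFollowsU_cons_insertH hD.h_not_mem _))
    (hFollowsU_u_cons.mpr (hw.hFollowsU ha))
    ((hD.isSMotzkin_greedyInsertH hn).2.2.2.2.trans hw.2.2.2.2.symm)
    (filter_ne_h_greedyInsertH hD.h_not_mem)

def atomicEquivDyck {n : ℕ} (hn : 0 < n) :
    {w : List Step // IsSMotzkin n w ∧ Atomic w} ≃ {D : List Step // IsDyck n D} where
  toFun w := ⟨w.1.filter (fun s => s ≠ Step.h), (isSMotzkin_iff.mp w.2.1).1⟩
  invFun D := ⟨greedyInsertH D.1, D.2.isSMotzkin_greedyInsertH hn,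
    (hFollowsU_cons_insertH D.2.h_not_mem _).atomic⟩
  left_inv w := Subtype.ext (w.2.1.greedyInsertH_filter_ne_h w.2.2 hn)
  right_inv D := Subtype.ext (filter_ne_h_greedyInsertH D.2.h_not_mem)

def DyckStep.toStep : DyckStep → Step
  | .U => .u
  | .D => .d

def Step.toDyckStep : Step → DyckStep
  | .u => .U
  | _ => .D

lemma DyckStep.toStep_injective : Function.Injective DyckStep.toStep := by
  rintro (_ | _) (_ | _) h <;> first | rfl | cases h

lemma isDyck_map_toStep_iff {n : ℕ} {l : List DyckStep} :
    IsDyck n (l.map DyckStep.toStep) ↔ l.count .U = n ∧ l.count .D = n ∧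
      ∀ i, (l.take i).count .D ≤ (l.take i).count .U := by
  have hu (l : List DyckStep) : (l.map DyckStep.toStep).count Step.u = l.count .U :=
    List.count_map_of_injective _ _ DyckStep.toStep_injective .U
  have hd (l : List DyckStep) : (l.map DyckStep.toStep).count Step.d = l.count .D :=
    List.count_map_of_injective _ _ DyckStep.toStep_injective .D
  have hmem : ∀ s ∈ l.map DyckStep.toStep, s = Step.u ∨ s = Step.d := by
    simp only [List.mem_map]
    rintro _ ⟨(_ | _), -, rfl⟩ <;> simp [DyckStep.toStep]
  simp only [IsDyck, nonnegPrefixes_iff, heightAt, hsum_eq_count_sub_count, ← List.map_take, hu, hd,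
    sub_nonneg, Nat.cast_le]
  exact ⟨fun h => h.2, fun h => ⟨hmem, h⟩⟩

lemma map_toStep_map_toDyckStep {D : List Step} (hD : ∀ s ∈ D, s = Step.u ∨ s = Step.d) :
    (D.map Step.toDyckStep).map DyckStep.toStep = D := by
  rw [List.map_map, List.map_congr_left (g := id), List.map_id]
  intro s hs
  rcases hD s hs with rfl | rfl <;> rfl

lemma map_toDyckStep_map_toStep (l : List DyckStep) :
    (l.map DyckStep.toStep).map Step.toDyckStep = l := by
  rw [List.map_map, List.map_congr_left (g := id), List.map_id]
  rintro (_ | _) - <;> rfl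

def dyckWordEquiv (n : ℕ) : {p : DyckWord // p.semilength = n} ≃ {D : List Step // IsDyck n D} where
  toFun p := ⟨p.1.toList.map DyckStep.toStep, isDyck_map_toStep_iff.mpr
    ⟨p.2, p.1.semilength_eq_count_D.symm.trans p.2, p.1.count_D_le_count_U⟩⟩
  invFun D :=
    have hD := isDyck_map_toStep_iff.mp ((map_toStep_map_toDyckStep D.2.1).symm ▸ D.2)
    ⟨⟨D.1.map Step.toDyckStep, hD.1.trans hD.2.1.symm, hD.2.2⟩, hD.1⟩
  left_inv _ := Subtype.ext (DyckWord.ext (map_toDyckStep_map_toStep _))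
  right_inv D := Subtype.ext (map_toStep_map_toDyckStep D.2.1)

lemma eq_nil_of_isSMotzkin_zero {w : List Step} (hw : IsSMotzkin 0 w) : w = [] := by
  obtain ⟨-, hu, hd, hh, -⟩ := hw
  cases w with
  | nil => rfl
  | cons s t => cases s <;> simp at hu hd hh

/-- atomic S-Motzkin paths of length 3n are counted by the Catalan
number Cₙ = (1/(n+1))·C(2n,n). -/
theorem atomic_smotzkin_catalan (n : ℕ) :
    Nat.card {w : List Step // IsSMotzkin n w ∧ Atomic w} =
      Nat.choose (2 * n) n / (n + 1) := by
  rw [← Nat.centralBinom_eq_two_mul_choose, ← catalan_eq_centralBinom_div]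
  rcases n.eq_zero_or_pos with rfl | hn
  · have hnil : IsSMotzkin 0 [] ∧ Atomic [] :=
      ⟨⟨⟨fun _ hp => by simp [List.prefix_nil.mp hp], rfl⟩, rfl, rfl, rfl, rfl⟩,
        HFollowsU.atomic List.IsChain.nil⟩
    rw [catalan_zero, Nat.card_eq_one_iff_exists]
    exact ⟨⟨[], hnil⟩, fun w => Subtype.ext (eq_nil_of_isSMotzkin_zero w.2.1)⟩
  · rw [Nat.card_congr ((atomicEquivDyck hn).trans (dyckWordEquiv n).symm),
      Nat.card_eq_fintype_card, DyckWord.card_dyckWord_semilength_eq_catalan]
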